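/- arXiv:0711.2793 — 6 statements merged into one kernel-verified Lean document; each statement's English description precedes it below -/
import Mathlib

section
/- Let ζ ∈ (−1,0) ∪ (0,1) be real and γ ≥ 0. The one-soliton function f satisfies the pole (residue) condition at ζ: the limit lim_{z→ζ} (z−ζ)·f(z) exists and equals −ζγ·f(ζ⁻¹). In other words, f has at most a simple pole at ζ whose residue is −ζγ times the value of f at the reflected point ζ⁻¹. -/
open Filter Topology

/-- The one-soliton function for the Toda lattice with eigenvalue parameter `ζ`
and norming constant `γ`. -/
noncomputable def solitonF (ζ γ : ℝ) (z : ℂ) : ℂ :=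
  ((γ : ℂ) * (ζ : ℂ) ^ 2 * (z - ((ζ : ℂ))⁻¹) / (z - (ζ : ℂ)) + 1 - (ζ : ℂ) ^ 2) /
    ((Real.sqrt (1 - ζ ^ 2 + γ) * Real.sqrt (1 - ζ ^ 2 + γ * ζ ^ 2) : ℝ) : ℂ)

/-!
Multiplying by `z - ζ` cancels the simple pole, leaving a function continuous at `ζ` whose
value there is `γ ζ² (ζ - ζ⁻¹) / d = -ζ γ (1 - ζ²) / d`, with `d` the constant denominator.
The first summand of `f` vanishes at `ζ⁻¹`, so `f(ζ⁻¹) = (1 - ζ²) / d`.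
-/

theorem tendsto_sub_mul_div_sub_add {𝕜 : Type*} [NormedField 𝕜] {g h : 𝕜 → 𝕜} {c : 𝕜}
    (hg : ContinuousAt g c) (hh : ContinuousAt h c) :
    Tendsto (fun z => (z - c) * (g z / (z - c) + h z)) (𝓝[≠] c) (𝓝 (g c)) := by
  have hcont : ContinuousAt (fun z => g z + (z - c) * h z) c := by fun_prop
  have hlim : Tendsto (fun z => g z + (z - c) * h z) (𝓝[≠] c) (𝓝 (g c)) := by
    simpa using tendsto_nhdsWithin_of_tendsto_nhds hcont.tendsto
  refine hlim.congr' (eventually_nhdsWithin_of_forall fun z hz => ?_)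
  dsimp only
  have hz : z - c ≠ 0 := sub_ne_zero.mpr hz
  rw [mul_add, mul_div_cancel₀ _ hz]

theorem sq_mul_sub_inv {K : Type*} [Field K] (a : K) : a ^ 2 * (a - a⁻¹) = -a * (1 - a ^ 2) := by
  rw [mul_sub, sq, mul_self_mul_inv]
  ring

theorem soliton_pole_condition_general (ζ γ : ℝ) :
    Tendsto (fun z : ℂ => (z - (ζ : ℂ)) * solitonF ζ γ z) (𝓝[≠] (ζ : ℂ))
      (𝓝 (-(ζ : ℂ) * (γ : ℂ) * solitonF ζ γ ((ζ : ℂ))⁻¹)) := by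
  set d : ℂ := ((Real.sqrt (1 - ζ ^ 2 + γ) * Real.sqrt (1 - ζ ^ 2 + γ * ζ ^ 2) : ℝ) : ℂ)
  have hlim := (tendsto_sub_mul_div_sub_add (c := (ζ : ℂ))
    (g := fun z => (γ : ℂ) * (ζ : ℂ) ^ 2 * (z - (ζ : ℂ)⁻¹)) (h := fun _ => 1 - (ζ : ℂ) ^ 2)
    (by fun_prop) continuousAt_const).div_const d
  have hres : (γ : ℂ) * (ζ : ℂ) ^ 2 * ((ζ : ℂ) - (ζ : ℂ)⁻¹) / d
      = -(ζ : ℂ) * (γ : ℂ) * solitonF ζ γ (ζ : ℂ)⁻¹ := by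
    simp only [solitonF, sub_self, mul_zero, zero_div, zero_add, mul_assoc, sq_mul_sub_inv]
    ring
  rw [← hres]
  convert hlim using 2 with z
  simp only [solitonF, mul_div_assoc', add_sub_assoc]
  rfl

/-- The one-soliton function satisfies the pole (residue) condition at `ζ`:
`lim_{z → ζ} (z - ζ) f(z) = -ζ γ f(ζ⁻¹)`. -/
theorem soliton_pole_condition (ζ γ : ℝ)
    (hζ : ζ ∈ Set.Ioo (-1 : ℝ) 0 ∪ Set.Ioo (0 : ℝ) 1) (hγ : 0 ≤ γ) :
    Tendsto (fun z : ℂ => (z - (ζ : ℂ)) * solitonF ζ γ z) (𝓝[≠] (ζ : ℂ))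
      (𝓝 (-(ζ : ℂ) * (γ : ℂ) * solitonF ζ γ ((ζ : ℂ))⁻¹)) :=
  soliton_pole_condition_general ζ γ
end

section
/- Uniqueness of the one-soliton solution: let ζ ∈ (−1,0) ∪ (0,1) be real and γ ≥ 0, and let a, b ∈ ℂ. Define h(z) = a + b/(z−ζ) for z ∈ ℂ∖{ζ}. Suppose h satisfies the pole condition b = −ζγ·h(ζ⁻¹), the normalization h(0)·a = 1 (note a = lim_{z→∞} h(z)), and h(0) is a positive real number. Then h coincides with the one-soliton function f, i.e. h(z) = f(z) for all z ∈ ℂ∖{ζ}. -/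
open Filter Topology

/-! The proof is a partial-fraction comparison. Writing `p = 1 - ζ² + γ` and `q = 1 - ζ² + γζ²`,
the soliton is `f(z) = √q/√p + c/(z - ζ)` with `c = -ζγ(1 - ζ²)/(√p√q)`. For `h = a + b/(z - ζ)`
the pole condition is linear in `(a, b)` and gives `b q = -ζγ(1 - ζ²) a`, whence `h(0) q = a p`.
Together with `h(0) a = 1` this yields `h(0)² q = p`, and positivity of `h(0)` selects the root
`h(0) = √p/√q`, so `a = √q/√p` and `b = c`. -/

theorem Real.eq_sqrt_div_sqrt_of_sq_mul_eq {r p q : ℝ} (hr : 0 ≤ r) (hq : 0 < q)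
    (h : r ^ 2 * q = p) : r = √p / √q := by
  rw [← h, Real.sqrt_mul (sq_nonneg r), Real.sqrt_sq hr,
    mul_div_cancel_right₀ r (Real.sqrt_pos.mpr hq).ne']

namespace Soliton

noncomputable def limitAtInfinity (ζ γ : ℝ) : ℝ :=
  √(1 - ζ ^ 2 + γ * ζ ^ 2) / √(1 - ζ ^ 2 + γ)

noncomputable def residue (ζ γ : ℝ) : ℝ :=
  -ζ * γ * (1 - ζ ^ 2) / (√(1 - ζ ^ 2 + γ) * √(1 - ζ ^ 2 + γ * ζ ^ 2))

variable {ζ γ : ℝ}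

theorem solitonF_eq_limitAtInfinity_add_residue_div (hζ : ζ ≠ 0) (hp : 0 < 1 - ζ ^ 2 + γ)
    (hq : 0 < 1 - ζ ^ 2 + γ * ζ ^ 2) {z : ℂ} (hz : z ≠ ζ) :
    solitonF ζ γ z = limitAtInfinity ζ γ + residue ζ γ / (z - ζ) := by
  unfold solitonF limitAtInfinity residue
  set s := √(1 - ζ ^ 2 + γ)
  set t := √(1 - ζ ^ 2 + γ * ζ ^ 2)
  have hs : (s : ℂ) ≠ 0 := by exact_mod_cast (Real.sqrt_pos.mpr hp).ne'
  have ht : (t : ℂ) ≠ 0 := by exact_mod_cast (Real.sqrt_pos.mpr hq).ne'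
  have ht2 : (t : ℂ) ^ 2 = 1 - ζ ^ 2 + γ * ζ ^ 2 := by exact_mod_cast Real.sq_sqrt hq.le
  have hζC : (ζ : ℂ) ≠ 0 := by exact_mod_cast hζ
  have hzζ : z - ζ ≠ 0 := sub_ne_zero.mpr hz
  push_cast
  field_simp
  linear_combination (ζ - z) * ht2

theorem residue_mul_eq (hq : 0 < 1 - ζ ^ 2 + γ * ζ ^ 2) :
    residue ζ γ * (1 - ζ ^ 2 + γ * ζ ^ 2) = -ζ * γ * (1 - ζ ^ 2) * limitAtInfinity ζ γ := by
  unfold residue limitAtInfinity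
  have ht2 := Real.sq_sqrt hq.le
  have ht := (Real.sqrt_pos.mpr hq).ne'
  set t := √(1 - ζ ^ 2 + γ * ζ ^ 2)
  rw [← ht2]
  field_simp

variable {a b : ℂ}

theorem mul_eq_of_pole_condition (hζ : ζ ≠ 0) (hζ1 : 1 - ζ ^ 2 ≠ 0)
    (hpole : b = -ζ * γ * (a + b / ((ζ : ℂ)⁻¹ - ζ))) :
    b * (1 - ζ ^ 2 + γ * ζ ^ 2) = -ζ * γ * (1 - ζ ^ 2) * a := by
  have hζC : (ζ : ℂ) ≠ 0 := by exact_mod_cast hζ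
  have hζ1C : (1 : ℂ) - ζ ^ 2 ≠ 0 := by exact_mod_cast hζ1
  have hd : (ζ : ℂ)⁻¹ - ζ = (1 - ζ ^ 2) / ζ := by field_simp
  rw [hd] at hpole
  field_simp at hpole
  linear_combination hpole

theorem value_at_zero_mul_eq (hζ : ζ ≠ 0)
    (hb : b * (1 - ζ ^ 2 + γ * ζ ^ 2) = -ζ * γ * (1 - ζ ^ 2) * a) :
    (a + b / (0 - ζ)) * (1 - ζ ^ 2 + γ * ζ ^ 2) = a * (1 - ζ ^ 2 + γ) := by
  have hζC : (ζ : ℂ) ≠ 0 := by exact_mod_cast hζ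
  field_simp
  linear_combination hb

end Soliton

open Soliton in
/-- Uniqueness of the one-soliton solution: if `h(z) = a + b/(z-ζ)` satisfies the pole
condition `b = -ζγ h(ζ⁻¹)`, the normalization `h(0) a = 1`, and `h(0)` is a positive real
number, then `h` coincides with the one-soliton function `f`. -/
theorem soliton_uniqueness (ζ γ : ℝ)
    (hζ : ζ ∈ Set.Ioo (-1 : ℝ) 0 ∪ Set.Ioo (0 : ℝ) 1) (hγ : 0 ≤ γ) (a b : ℂ)
    (hpole : b = -(ζ : ℂ) * (γ : ℂ) * (a + b / (((ζ : ℂ))⁻¹ - (ζ : ℂ))))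
    (hnorm : (a + b / ((0 : ℂ) - (ζ : ℂ))) * a = 1)
    (hpos : ∃ r : ℝ, 0 < r ∧ a + b / ((0 : ℂ) - (ζ : ℂ)) = (r : ℂ)) :
    ∀ z : ℂ, z ≠ (ζ : ℂ) → a + b / (z - (ζ : ℂ)) = solitonF ζ γ z := by
  obtain ⟨r, hr0, hr⟩ := hpos
  have hζ0 : ζ ≠ 0 := by rcases hζ with h | h; exacts [h.2.ne, h.1.ne']
  have hζ1 : 0 < 1 - ζ ^ 2 := by rcases hζ with h | h <;> nlinarith [h.1, h.2]
  have hp : 0 < 1 - ζ ^ 2 + γ := by linarith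
  have hq : 0 < 1 - ζ ^ 2 + γ * ζ ^ 2 := by nlinarith [mul_nonneg hγ (sq_nonneg ζ)]
  have hb := mul_eq_of_pole_condition hζ0 hζ1.ne' hpole
  have hval0 := value_at_zero_mul_eq hζ0 hb
  rw [hr] at hnorm hval0
  have hr2 : r ^ 2 * (1 - ζ ^ 2 + γ * ζ ^ 2) = 1 - ζ ^ 2 + γ := by
    have : ((r ^ 2 * (1 - ζ ^ 2 + γ * ζ ^ 2) : ℝ) : ℂ) = ((1 - ζ ^ 2 + γ : ℝ) : ℂ) := by
      push_cast
      linear_combination (r : ℂ) * hval0 + (1 - ζ ^ 2 + γ : ℂ) * hnorm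
    exact_mod_cast this
  have ha : a = limitAtInfinity ζ γ := by
    rw [eq_inv_of_mul_eq_one_right hnorm, Real.eq_sqrt_div_sqrt_of_sq_mul_eq hr0.le hq hr2]
    push_cast [limitAtInfinity]
    exact inv_div _ _
  have hb' : b = residue ζ γ := by
    have hqC : (1 - ζ ^ 2 + γ * ζ ^ 2 : ℂ) ≠ 0 := by exact_mod_cast hq.ne'
    refine mul_right_cancel₀ hqC ?_
    rw [hb, ha]
    exact_mod_cast (residue_mul_eq hq).symm
  intro z hz
  rw [solitonF_eq_limitAtInfinity_add_residue_div hζ0 hp hq hz, ha, hb']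
end

section
/- Resonance characterization for the one-soliton solution: let ζ ∈ (−1,0) ∪ (0,1) be real, γ > 0, and let z₁ ∈ ℂ with z₁ ∉ {0, ζ, ζ⁻¹}. Then f(z₁) = 0 and f(z₁⁻¹) = 0 hold simultaneously if and only if either (z₁ = 1 and γ = ζ⁻¹ − ζ) or (z₁ = −1 and γ = ζ − ζ⁻¹). In particular, the symmetric vector (f(z), f(1/z)) can vanish only at z = ±1. -/
/-
Clearing the pole, `f(z) = 0` becomes the linear equation `(1 - ζ² + γζ²) z = ζ (1 - ζ² + γ)`,
so `f` has a single real zero `solitonZero ζ γ`. Hence `f(z₁) = f(z₁⁻¹) = 0` forces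
`z₁ = z₁⁻¹ = solitonZero ζ γ`, i.e. `z₁ = solitonZero ζ γ = ±1`, and `solitonZero ζ γ = ±1`
factors as `(1 ∓ ζ)(1 - ζ² ∓ γζ) = 0`.
-/

open Filter Topology

theorem eq_and_inv_eq_iff {K : Type*} [DivisionRing K] {a b : K} (ha : a ≠ 0) :
    (a = b ∧ a⁻¹ = b) ↔ (a = 1 ∧ b = 1) ∨ (a = -1 ∧ b = -1) := by
  constructor
  · rintro ⟨rfl, hinv⟩
    rcases inv_eq_self₀.mp hinv with h | h | h
    · exact .inr ⟨h, h⟩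
    · exact absurd h ha
    · exact .inl ⟨h, h⟩
  · rintro (⟨rfl, rfl⟩ | ⟨rfl, rfl⟩) <;> simp

noncomputable def solitonZero (ζ γ : ℝ) : ℝ :=
  ζ * (1 - ζ ^ 2 + γ) / (1 - ζ ^ 2 + γ * ζ ^ 2)

section

variable {ζ γ : ℝ}

theorem solitonF_eq_zero_iff (hζ : ζ ≠ 0) (hA : 0 < 1 - ζ ^ 2 + γ)
    (hB : 0 < 1 - ζ ^ 2 + γ * ζ ^ 2) {z : ℂ} (hz : z ≠ ζ) :
    solitonF ζ γ z = 0 ↔ z = solitonZero ζ γ := by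
  have hζ' : (ζ : ℂ) ≠ 0 := by exact_mod_cast hζ
  have hB' : ((1 - ζ ^ 2 + γ * ζ ^ 2 : ℝ) : ℂ) ≠ 0 := by exact_mod_cast hB.ne'
  have hpole : z - ζ ≠ 0 := sub_ne_zero.mpr hz
  have hnorm : ((Real.sqrt (1 - ζ ^ 2 + γ) * Real.sqrt (1 - ζ ^ 2 + γ * ζ ^ 2) : ℝ) : ℂ) ≠ 0 :=
    Complex.ofReal_ne_zero.mpr (by positivity)
  have hnum : (γ : ℂ) * ζ ^ 2 * (z - (ζ : ℂ)⁻¹) / (z - ζ) + 1 - ζ ^ 2 =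
      ((1 - ζ ^ 2 + γ * ζ ^ 2 : ℝ) : ℂ) * (z - solitonZero ζ γ) / (z - ζ) := by
    unfold solitonZero
    push_cast at hB' ⊢
    field_simp
    ring
  unfold solitonF
  rw [hnum, div_eq_zero_iff, div_eq_zero_iff, mul_eq_zero, sub_eq_zero]
  simp only [hB', hpole, hnorm, false_or, or_false]

theorem solitonZero_eq_one_iff (hζ₀ : ζ ≠ 0) (hζ₁ : ζ ≠ 1)
    (hB : 1 - ζ ^ 2 + γ * ζ ^ 2 ≠ 0) :
    solitonZero ζ γ = 1 ↔ γ = ζ⁻¹ - ζ := by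
  have h1 : 1 - ζ ≠ 0 := sub_ne_zero.mpr (Ne.symm hζ₁)
  rw [solitonZero, div_eq_one_iff_eq hB]
  constructor
  · intro h
    have hfac : (1 - ζ) * (1 - ζ ^ 2 - γ * ζ) = 0 := by linear_combination -h
    field_simp
    linear_combination -(mul_eq_zero.mp hfac).resolve_left h1
  · rintro rfl
    field_simp
    ring

theorem solitonZero_eq_neg_one_iff (hζ₀ : ζ ≠ 0) (hζ₁ : ζ ≠ -1)
    (hB : 1 - ζ ^ 2 + γ * ζ ^ 2 ≠ 0) :
    solitonZero ζ γ = -1 ↔ γ = ζ - ζ⁻¹ := by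
  have h1 : 1 + ζ ≠ 0 := fun h ↦ hζ₁ (by linear_combination h)
  rw [solitonZero, div_eq_iff hB]
  constructor
  · intro h
    have hfac : (1 + ζ) * (1 - ζ ^ 2 + γ * ζ) = 0 := by linear_combination h
    field_simp
    linear_combination (mul_eq_zero.mp hfac).resolve_left h1
  · rintro rfl
    field_simp
    ring

end

/-- Resonance characterization: for `z₁ ∉ {0, ζ, ζ⁻¹}`, the vector `(f(z₁), f(z₁⁻¹))`
vanishes if and only if `z₁ = 1` and `γ = ζ⁻¹ - ζ`, or `z₁ = -1` and `γ = ζ - ζ⁻¹`. -/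
theorem soliton_resonance (ζ γ : ℝ)
    (hζ : ζ ∈ Set.Ioo (-1 : ℝ) 0 ∪ Set.Ioo (0 : ℝ) 1) (hγ : 0 < γ) (z₁ : ℂ)
    (h0 : z₁ ≠ 0) (h1 : z₁ ≠ (ζ : ℂ)) (h2 : z₁ ≠ ((ζ : ℂ))⁻¹) :
    (solitonF ζ γ z₁ = 0 ∧ solitonF ζ γ z₁⁻¹ = 0) ↔
      ((z₁ = 1 ∧ γ = ζ⁻¹ - ζ) ∨ (z₁ = -1 ∧ γ = ζ - ζ⁻¹)) := by
  obtain ⟨hζ₀, hζ_lt, hζ_gt⟩ : ζ ≠ 0 ∧ ζ < 1 ∧ -1 < ζ := by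
    rcases hζ with ⟨hl, hr⟩ | ⟨hl, hr⟩
    · exact ⟨hr.ne, by linarith, hl⟩
    · exact ⟨hl.ne', hr, by linarith⟩
  have hA : 0 < 1 - ζ ^ 2 + γ := by nlinarith
  have hB : 0 < 1 - ζ ^ 2 + γ * ζ ^ 2 := by nlinarith [sq_nonneg ζ]
  have h2' : z₁⁻¹ ≠ ζ := fun h ↦ h2 (by rw [← h, inv_inv])
  rw [solitonF_eq_zero_iff hζ₀ hA hB h1, solitonF_eq_zero_iff hζ₀ hA hB h2',
    eq_and_inv_eq_iff h0, ← Complex.ofReal_one, ← Complex.ofReal_neg, Complex.ofReal_inj,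
    Complex.ofReal_inj, solitonZero_eq_one_iff hζ₀ hζ_lt.ne hB.ne',
    solitonZero_eq_neg_one_iff hζ₀ hζ_gt.ne' hB.ne']
end

section
/- Let c < −1 be real and set z₀ = −c − √(c²−1). Then 0 < z₀ < 1, and there exists a unique ζ₀ ∈ (0,1) satisfying ζ₀ − ζ₀⁻¹ + 2c·log ζ₀ = 0; moreover this ζ₀ satisfies 0 < ζ₀ < z₀ < 1. -/
/-!
The phase `φ(x) = x - x⁻¹ + 2c log x` has derivative `(x - z₀)(x - z₁) / x²`, where
`z₀ ≤ z₁` (`lowerRoot`, `upperRoot`) are the roots of `x² + 2cx + 1`, so `z₀ z₁ = 1`.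
Hence `φ` increases on `(0, z₀]` and decreases on `[z₀, z₁] ∋ 1`; since `φ 1 = 0`, it is
positive on `[z₀, 1)`, so every zero in `(0, 1)` lies in `(0, z₀)`, where `φ` is injective.
Existence follows from the intermediate value theorem, using `φ(e^{4c}) < 0` and `e^{4c} < z₀`.
-/

open Real Set

namespace StationaryPhase

noncomputable def phase (c x : ℝ) : ℝ := x - x⁻¹ + 2 * c * log x

noncomputable def lowerRoot (c : ℝ) : ℝ := -c - √(c ^ 2 - 1)

noncomputable def upperRoot (c : ℝ) : ℝ := -c + √(c ^ 2 - 1)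

variable {c : ℝ}

lemma sqrt_sq_sub_one_lt_neg (hc : c < 0) : √(c ^ 2 - 1) < -c :=
  (sqrt_lt' (by linarith)).2 (by linarith)

lemma lowerRoot_pos (hc : c < 0) : 0 < lowerRoot c := by
  have := sqrt_sq_sub_one_lt_neg hc
  unfold lowerRoot; linarith

lemma lowerRoot_lt_one (hc : c < -1) : lowerRoot c < 1 := by
  have : -c - 1 < √(c ^ 2 - 1) := (lt_sqrt (by linarith)).2 (by nlinarith)
  unfold lowerRoot; linarith

lemma lowerRoot_le_upperRoot : lowerRoot c ≤ upperRoot c := by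
  have := sqrt_nonneg (c ^ 2 - 1)
  unfold lowerRoot upperRoot; linarith

lemma one_le_upperRoot (hc : c ≤ -1) : 1 ≤ upperRoot c := by
  have := sqrt_nonneg (c ^ 2 - 1)
  unfold upperRoot; linarith

lemma upperRoot_lt_neg_two_mul (hc : c < 0) : upperRoot c < -2 * c := by
  have := sqrt_sq_sub_one_lt_neg hc
  unfold upperRoot; linarith

lemma lowerRoot_mul_upperRoot (hc : 1 ≤ c ^ 2) : lowerRoot c * upperRoot c = 1 := by
  have := sq_sqrt (sub_nonneg.2 hc)
  unfold lowerRoot upperRoot; linear_combination -this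

lemma sq_add_two_mul_add_one_eq (hc : 1 ≤ c ^ 2) (x : ℝ) :
    x ^ 2 + 2 * c * x + 1 = (x - lowerRoot c) * (x - upperRoot c) := by
  have hsum : lowerRoot c + upperRoot c = -2 * c := by unfold lowerRoot upperRoot; ring
  linear_combination x * hsum - lowerRoot_mul_upperRoot hc

lemma hasDerivAt_phase {x : ℝ} (hx : x ≠ 0) :
    HasDerivAt (phase c) ((x ^ 2 + 2 * c * x + 1) / x ^ 2) x := by
  refine (((hasDerivAt_id x).sub (hasDerivAt_inv hx)).add
    ((hasDerivAt_log hx).const_mul (2 * c))).congr_deriv ?_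
  field_simp
  ring

lemma continuousOn_phase : ContinuousOn (phase c) (Ioi 0) :=
  fun _ hx => (hasDerivAt_phase (ne_of_gt hx)).continuousAt.continuousWithinAt

@[simp]
lemma phase_one : phase c 1 = 0 := by simp [phase]

lemma strictMonoOn_phase (hc : c ≤ -1) : StrictMonoOn (phase c) (Ioc 0 (lowerRoot c)) := by
  refine strictMonoOn_of_deriv_pos (convex_Ioc _ _)
    (continuousOn_phase.mono fun _ hx => hx.1) fun x hx => ?_
  rw [interior_Ioc] at hx
  have hupper : x < upperRoot c := hx.2.trans_le lowerRoot_le_upperRoot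
  rw [(hasDerivAt_phase hx.1.ne').deriv, sq_add_two_mul_add_one_eq (by nlinarith)]
  exact div_pos (mul_pos_of_neg_of_neg (sub_neg.2 hx.2) (sub_neg.2 hupper)) (pow_pos hx.1 2)

lemma strictAntiOn_phase (hc : c ≤ -1) :
    StrictAntiOn (phase c) (Icc (lowerRoot c) (upperRoot c)) := by
  have hpos := lowerRoot_pos (by linarith : c < 0)
  refine strictAntiOn_of_deriv_neg (convex_Icc _ _)
    (continuousOn_phase.mono fun _ hx => hpos.trans_le hx.1) fun x hx => ?_
  rw [interior_Icc] at hx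
  rw [(hasDerivAt_phase (hpos.trans hx.1).ne').deriv, sq_add_two_mul_add_one_eq (by nlinarith)]
  exact div_neg_of_neg_of_pos (mul_neg_of_pos_of_neg (sub_pos.2 hx.1) (sub_neg.2 hx.2))
    (pow_pos (hpos.trans hx.1) 2)

lemma phase_pos_of_lowerRoot_le_of_lt_one (hc : c < -1) {x : ℝ} (hx₀ : lowerRoot c ≤ x)
    (hx₁ : x < 1) : 0 < phase c x := by
  have h1 : 1 ∈ Icc (lowerRoot c) (upperRoot c) :=
    ⟨hx₀.trans hx₁.le, one_le_upperRoot hc.le⟩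
  simpa using strictAntiOn_phase hc.le ⟨hx₀, hx₁.le.trans h1.2⟩ h1 hx₁

lemma phase_exp_four_mul_neg (hc : c < 0) : phase c (exp (4 * c)) < 0 := by
  have hquad := quadratic_le_exp_of_nonneg (by linarith : 0 ≤ -(4 * c))
  have hsmall : exp (4 * c) < 1 := exp_lt_one_iff.2 (by linarith)
  rw [phase, log_exp, ← exp_neg]
  nlinarith

-- `e^{4c} < 1/(-2c) < 1/z₁ = z₀`.
lemma exp_four_mul_lt_lowerRoot (hc : c ≤ -1) : exp (4 * c) < lowerRoot c := by
  have hc₀ : c < 0 := by linarith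
  have hlin : -2 * c < exp (-(4 * c)) := by linarith [add_one_le_exp (-(4 * c))]
  have hprod : exp (4 * c) * exp (-(4 * c)) = 1 := by rw [← exp_add]; simp
  have hroots := lowerRoot_mul_upperRoot (by nlinarith : 1 ≤ c ^ 2)
  have hupper := upperRoot_lt_neg_two_mul hc₀
  nlinarith [exp_pos (4 * c), lowerRoot_pos hc₀]

lemma exists_phase_eq_zero (hc : c < -1) : ∃ ζ ∈ Ioo 0 (lowerRoot c), phase c ζ = 0 := by
  have hc₀ : c < 0 := by linarith
  obtain ⟨ζ, hζ, hζ₀⟩ := intermediate_value_Ioo (exp_four_mul_lt_lowerRoot hc.le).le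
    (continuousOn_phase.mono fun _ hx => (exp_pos _).trans_le hx.1)
    ⟨phase_exp_four_mul_neg hc₀,
      phase_pos_of_lowerRoot_le_of_lt_one hc le_rfl (lowerRoot_lt_one hc)⟩
  exact ⟨ζ, ⟨(exp_pos _).trans hζ.1, hζ.2⟩, hζ₀⟩

lemma lt_lowerRoot_of_phase_eq_zero (hc : c < -1) {ζ : ℝ} (hζ : ζ < 1) (h : phase c ζ = 0) :
    ζ < lowerRoot c := by
  by_contra! hle
  exact (phase_pos_of_lowerRoot_le_of_lt_one hc hle hζ).ne' h

end StationaryPhase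

open StationaryPhase in
/-- For `c < -1` and `z₀ = -c - √(c²-1)` one has `0 < z₀ < 1`, and there is a unique
`ζ₀ ∈ (0,1)` with `ζ₀ - ζ₀⁻¹ + 2c log ζ₀ = 0`; moreover `0 < ζ₀ < z₀ < 1`. -/
theorem stationary_point_order_left (c : ℝ) (hc : c < -1) :
    0 < -c - Real.sqrt (c ^ 2 - 1) ∧ -c - Real.sqrt (c ^ 2 - 1) < 1 ∧
      ∃ ζ₀ : ℝ, (ζ₀ ∈ Set.Ioo (0 : ℝ) 1 ∧ ζ₀ - ζ₀⁻¹ + 2 * c * Real.log ζ₀ = 0) ∧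
        (∀ ζ : ℝ, ζ ∈ Set.Ioo (0 : ℝ) 1 ∧ ζ - ζ⁻¹ + 2 * c * Real.log ζ = 0 → ζ = ζ₀) ∧
        0 < ζ₀ ∧ ζ₀ < -c - Real.sqrt (c ^ 2 - 1) := by
  have hlt_one : lowerRoot c < 1 := lowerRoot_lt_one hc
  obtain ⟨ζ₀, hζ₀, hφζ₀⟩ := exists_phase_eq_zero hc
  refine ⟨lowerRoot_pos (by linarith), hlt_one, ζ₀, ⟨⟨hζ₀.1, hζ₀.2.trans hlt_one⟩, hφζ₀⟩,
    fun ζ ⟨hζ, hφζ⟩ => ?_, hζ₀⟩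
  exact strictMonoOn_phase hc.le |>.injOn
    ⟨hζ.1, (lt_lowerRoot_of_phase_eq_zero hc hζ.2 hφζ).le⟩ ⟨hζ₀.1, hζ₀.2.le⟩
    (hφζ.trans hφζ₀.symm)
end

section
/- Let c > 1 be real and set z₀ = −c + √(c²−1). Then −1 < z₀ < 0, and there exists a unique ζ₀ ∈ (−1,0) satisfying ζ₀ − ζ₀⁻¹ + 2c·log(−ζ₀) = 0; moreover this ζ₀ satisfies −1 < z₀ < ζ₀ < 0. -/
/-!
In the variable `x = -ζ` the equation reads `f x = 0` with `f x = -x + x⁻¹ + 2c log x`, and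
`f' x = -(x² - 2cx + 1) / x²` vanishes at `x₀ = -z₀ = c - √(c² - 1) ∈ (0, 1)` and at `1 / x₀ > 1`.
Hence `f` decreases on `(0, x₀]` and increases on `[x₀, 1 / x₀]`. As `f 1 = 0`, `f < 0` on
`[x₀, 1)`; as `x f(x) → 1` when `x → 0⁺`, `f` is positive near `0` and so has exactly one zero
in `(0, x₀)`.
-/

open Real Set Filter Topology

-- `Re Φ(-x)` for `x > 0`.
noncomputable def negAxisPhase (c x : ℝ) : ℝ := -x + x⁻¹ + 2 * c * log x

section negAxisPhase

variable {c : ℝ}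

lemma negAxisPhase_neg (c ζ : ℝ) :
    negAxisPhase c (-ζ) = ζ - ζ⁻¹ + 2 * c * log (-ζ) := by
  simp only [negAxisPhase, neg_neg, inv_neg]
  ring

@[simp] lemma negAxisPhase_one (c : ℝ) : negAxisPhase c 1 = 0 := by
  simp [negAxisPhase]

lemma hasDerivAt_negAxisPhase (c : ℝ) {x : ℝ} (hx : x ≠ 0) :
    HasDerivAt (negAxisPhase c) (-(x ^ 2 - 2 * c * x + 1) / x ^ 2) x := by
  refine (((hasDerivAt_id x).neg.add (hasDerivAt_inv hx)).add
    ((hasDerivAt_log hx).const_mul (2 * c))).congr_deriv ?_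
  field_simp
  ring

lemma continuousOn_negAxisPhase (c : ℝ) : ContinuousOn (negAxisPhase c) (Ioi 0) :=
  fun _ hx ↦ (hasDerivAt_negAxisPhase c (ne_of_gt hx)).continuousAt.continuousWithinAt

lemma sq_sub_two_mul_add_one_eq (hc : 1 ≤ c) (x : ℝ) :
    x ^ 2 - 2 * c * x + 1 = (x - (c - √(c ^ 2 - 1))) * (x - (c + √(c ^ 2 - 1))) := by
  have hs : √(c ^ 2 - 1) ^ 2 = c ^ 2 - 1 := sq_sqrt (by nlinarith)
  linear_combination hs

lemma sub_sqrt_sq_sub_one_pos (hc : 0 < c) : 0 < c - √(c ^ 2 - 1) := by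
  rw [sub_pos, sqrt_lt' hc]
  linarith

lemma sub_sqrt_sq_sub_one_lt_one (hc : 1 < c) : c - √(c ^ 2 - 1) < 1 := by
  rw [sub_lt_comm, lt_sqrt (by linarith)]
  nlinarith

lemma negAxisPhase_strictAntiOn (hc : 1 ≤ c) :
    StrictAntiOn (negAxisPhase c) (Ioc 0 (c - √(c ^ 2 - 1))) := by
  refine strictAntiOn_of_deriv_neg (convex_Ioc _ _)
    ((continuousOn_negAxisPhase c).mono Ioc_subset_Ioi_self) fun x hx ↦ ?_
  rw [interior_Ioc] at hx
  have hx0 := hx.1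
  have hs := sqrt_nonneg (c ^ 2 - 1)
  rw [(hasDerivAt_negAxisPhase c hx0.ne').deriv, sq_sub_two_mul_add_one_eq hc]
  exact div_neg_of_neg_of_pos
    (neg_neg_of_pos (mul_pos_of_neg_of_neg (by linarith [hx.2]) (by linarith [hx.2])))
    (by positivity)

lemma negAxisPhase_strictMonoOn (hc : 1 ≤ c) :
    StrictMonoOn (negAxisPhase c) (Icc (c - √(c ^ 2 - 1)) (c + √(c ^ 2 - 1))) := by
  have hx₀ := sub_sqrt_sq_sub_one_pos (c := c) (by linarith)
  refine strictMonoOn_of_deriv_pos (convex_Icc _ _)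
    ((continuousOn_negAxisPhase c).mono fun x hx ↦ hx₀.trans_le hx.1) fun x hx ↦ ?_
  rw [interior_Icc] at hx
  have hx0 : 0 < x := hx₀.trans hx.1
  rw [(hasDerivAt_negAxisPhase c hx0.ne').deriv, sq_sub_two_mul_add_one_eq hc]
  exact div_pos (neg_pos_of_neg (mul_neg_of_pos_of_neg (by linarith [hx.1]) (by linarith [hx.2])))
    (by positivity)

lemma negAxisPhase_neg_of_mem_Ico (hc : 1 < c) {x : ℝ} (hx : x ∈ Ico (c - √(c ^ 2 - 1)) 1) :
    negAxisPhase c x < 0 := by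
  have h1 : (1 : ℝ) ∈ Icc (c - √(c ^ 2 - 1)) (c + √(c ^ 2 - 1)) :=
    ⟨(sub_sqrt_sq_sub_one_lt_one hc).le, by linarith [sqrt_nonneg (c ^ 2 - 1)]⟩
  simpa using negAxisPhase_strictMonoOn hc.le ⟨hx.1, hx.2.le.trans h1.2⟩ h1 hx.2

lemma exists_negAxisPhase_pos {b : ℝ} (hb : 0 < b) : ∃ a ∈ Ioo 0 b, 0 < negAxisPhase c a := by
  have hcont : Continuous fun x ↦ -x ^ 2 + 1 + 2 * c * (x * log x) := by fun_prop
  have hpos : ∀ᶠ x in 𝓝[>] 0, 0 < -x ^ 2 + 1 + 2 * c * (x * log x) :=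
    eventually_nhdsWithin_of_eventually_nhds
      (hcont.continuousAt.eventually (lt_mem_nhds (by simp)))
  obtain ⟨a, ha, ha_mem⟩ := (hpos.and (Ioo_mem_nhdsGT hb)).exists
  have hmul : a * negAxisPhase c a = -a ^ 2 + 1 + 2 * c * (a * log a) := by
    have : a ≠ 0 := ha_mem.1.ne'
    simp only [negAxisPhase]
    field_simp
  exact ⟨a, ha_mem, pos_of_mul_pos_right (hmul ▸ ha) ha_mem.1.le⟩

lemma exists_negAxisPhase_eq_zero (hc : 1 < c) :
    ∃ x ∈ Ioo 0 (c - √(c ^ 2 - 1)), negAxisPhase c x = 0 := by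
  have hx₀ := sub_sqrt_sq_sub_one_pos (c := c) (by linarith)
  have hfx₀ : negAxisPhase c (c - √(c ^ 2 - 1)) < 0 :=
    negAxisPhase_neg_of_mem_Ico hc ⟨le_rfl, sub_sqrt_sq_sub_one_lt_one hc⟩
  obtain ⟨a, ha, hfa⟩ := exists_negAxisPhase_pos (c := c) hx₀
  obtain ⟨x, hx, hfx⟩ := intermediate_value_Ioo' ha.2.le
    ((continuousOn_negAxisPhase c).mono fun _ hy ↦ ha.1.trans_le hy.1) ⟨hfx₀, hfa⟩
  exact ⟨x, ⟨ha.1.trans hx.1, hx.2⟩, hfx⟩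

lemma lt_of_negAxisPhase_eq_zero (hc : 1 < c) {x : ℝ} (hx : x < 1) (hfx : negAxisPhase c x = 0) :
    x < c - √(c ^ 2 - 1) := by
  by_contra! h
  exact (negAxisPhase_neg_of_mem_Ico hc ⟨h, hx⟩).ne hfx

lemma eq_of_negAxisPhase_eq_zero (hc : 1 < c) {x y : ℝ} (hx : x ∈ Ioo 0 1) (hy : y ∈ Ioo 0 1)
    (hfx : negAxisPhase c x = 0) (hfy : negAxisPhase c y = 0) : x = y :=
  (negAxisPhase_strictAntiOn hc.le).injOn ⟨hx.1, (lt_of_negAxisPhase_eq_zero hc hx.2 hfx).le⟩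
    ⟨hy.1, (lt_of_negAxisPhase_eq_zero hc hy.2 hfy).le⟩ (hfx.trans hfy.symm)

end negAxisPhase

/-- For `c > 1` and `z₀ = -c + √(c²-1)` one has `-1 < z₀ < 0`, and there is a unique
`ζ₀ ∈ (-1,0)` with `ζ₀ - ζ₀⁻¹ + 2c log(-ζ₀) = 0`; moreover `-1 < z₀ < ζ₀ < 0`. -/
theorem stationary_point_order_right (c : ℝ) (hc : 1 < c) :
    -1 < -c + Real.sqrt (c ^ 2 - 1) ∧ -c + Real.sqrt (c ^ 2 - 1) < 0 ∧
      ∃ ζ₀ : ℝ, (ζ₀ ∈ Set.Ioo (-1 : ℝ) 0 ∧ ζ₀ - ζ₀⁻¹ + 2 * c * Real.log (-ζ₀) = 0) ∧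
        (∀ ζ : ℝ, ζ ∈ Set.Ioo (-1 : ℝ) 0 ∧ ζ - ζ⁻¹ + 2 * c * Real.log (-ζ) = 0 → ζ = ζ₀) ∧
        -c + Real.sqrt (c ^ 2 - 1) < ζ₀ ∧ ζ₀ < 0 := by
  have hx₀ := sub_sqrt_sq_sub_one_pos (c := c) (by linarith)
  have hx₀_lt := sub_sqrt_sq_sub_one_lt_one hc
  obtain ⟨x, hx, hfx⟩ := exists_negAxisPhase_eq_zero hc
  have hx_mem : x ∈ Ioo 0 1 := ⟨hx.1, hx.2.trans hx₀_lt⟩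
  refine ⟨by linarith, by linarith, -x, ⟨⟨by linarith [hx_mem.2], by linarith [hx.1]⟩, ?_⟩,
    fun ζ ⟨hζ, hfζ⟩ ↦ ?_, by linarith [hx.2], by linarith [hx.1]⟩
  · rw [← negAxisPhase_neg, neg_neg, hfx]
  · rw [← negAxisPhase_neg] at hfζ
    have hζ' : -ζ ∈ Ioo 0 1 := ⟨by linarith [hζ.2], by linarith [hζ.1]⟩
    exact neg_eq_iff_eq_neg.mp (eq_of_negAxisPhase_eq_zero hc hζ' hx_mem hfζ hfx)
end

section
/- Non-uniqueness for negative coupling: let ζ ∈ (−1,0) ∪ (0,1) be real and set γ = ζ² − 1 (which is negative). Then the function f(z) = z/(ζ(z−ζ)), defined for z ∈ ℂ∖{ζ}, satisfies the one-soliton pole condition lim_{z→ζ} (z−ζ)·f(z) = −ζγ·f(ζ⁻¹), and moreover f(0) = 0. Consequently the corresponding symmetric vector (f(z), f(1/z)) vanishes in its first component at z = 0 and cannot be normalized to have positive first component there. -/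
open Filter Topology

/-- The resonant function `f(z) = z/(ζ(z-ζ))` appearing in the non-uniqueness example. -/
noncomputable def resonantF (ζ : ℝ) (z : ℂ) : ℂ :=
  z / ((ζ : ℂ) * (z - (ζ : ℂ)))

/- The pole of `f` at `ζ` is simple with residue `1`, while `f(ζ⁻¹) = 1/(ζ(1-ζ²))`; so the pole
condition holds exactly for the coupling `γ = ζ² - 1`, which is negative for `0 < |ζ| < 1`. On the
other hand `f(0) = 0`, so the first component of `(f(z), f(1/z))` cannot be made positive at `0`. -/

theorem resonantF_zero (ζ : ℝ) : resonantF ζ 0 = 0 := by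
  simp [resonantF]

theorem resonantF_inv (ζ : ℝ) : resonantF ζ (ζ : ℂ)⁻¹ = ((ζ : ℂ) * (1 - (ζ : ℂ) ^ 2))⁻¹ := by
  rcases eq_or_ne (ζ : ℂ) 0 with hζ | hζ
  · simp [resonantF, hζ]
  · rw [resonantF, mul_sub, mul_inv_cancel₀ hζ, ← sq, div_eq_mul_inv, mul_inv]

theorem sub_mul_resonantF {ζ : ℝ} {z : ℂ} (hz : z ≠ ζ) : (z - ζ) * resonantF ζ z = z / ζ := by
  rw [resonantF, mul_div_assoc', mul_comm (ζ : ℂ), mul_div_mul_left _ _ (sub_ne_zero.mpr hz)]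

theorem tendsto_sub_mul_resonantF {ζ : ℝ} (hζ : ζ ≠ 0) :
    Tendsto (fun z : ℂ => (z - ζ) * resonantF ζ z) (𝓝[≠] (ζ : ℂ)) (𝓝 1) := by
  have hlim : Tendsto (fun z : ℂ => z / ζ) (𝓝[≠] (ζ : ℂ)) (𝓝 1) := by
    rw [← div_self (Complex.ofReal_ne_zero.mpr hζ)]
    exact ((continuous_id.div_const _).tendsto _).mono_left nhdsWithin_le_nhds
  refine hlim.congr' ?_
  filter_upwards [self_mem_nhdsWithin] with z hz
  exact (sub_mul_resonantF hz).symm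

theorem sq_lt_one_of_mem_punctured_Ioo {ζ : ℝ} (hζ : ζ ∈ Set.Ioo (-1 : ℝ) 0 ∪ Set.Ioo (0 : ℝ) 1) :
    ζ ≠ 0 ∧ ζ ^ 2 < 1 := by
  rcases hζ with ⟨h₁, h₂⟩ | ⟨h₁, h₂⟩ <;> exact ⟨by linarith, by nlinarith⟩

/-- Non-uniqueness for negative coupling: for `γ = ζ² - 1 < 0` the function
`f(z) = z/(ζ(z-ζ))` satisfies the one-soliton pole condition
`lim_{z→ζ} (z-ζ) f(z) = -ζ γ f(ζ⁻¹)` and `f(0) = 0`, so the symmetric vector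
`(f(z), f(1/z))` vanishes in its first component at `z = 0`. -/
theorem negative_coupling_nonuniqueness (ζ γ : ℝ)
    (hζ : ζ ∈ Set.Ioo (-1 : ℝ) 0 ∪ Set.Ioo (0 : ℝ) 1) (hγ : γ = ζ ^ 2 - 1) :
    γ < 0 ∧
      Tendsto (fun z : ℂ => (z - (ζ : ℂ)) * resonantF ζ z) (𝓝[≠] (ζ : ℂ))
        (𝓝 (-(ζ : ℂ) * (γ : ℂ) * resonantF ζ ((ζ : ℂ))⁻¹)) ∧
      resonantF ζ 0 = 0 := by
  obtain ⟨hζ0, hζ1⟩ := sq_lt_one_of_mem_punctured_Ioo hζ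
  have hγ0 : γ < 0 := by linarith
  have hresidue : -(ζ : ℂ) * (γ : ℂ) * resonantF ζ ((ζ : ℂ))⁻¹ = 1 := by
    have hζC : (ζ : ℂ) ≠ 0 := by exact_mod_cast hζ0
    have hγC : (γ : ℂ) ≠ 0 := by exact_mod_cast hγ0.ne
    rw [resonantF_inv, show 1 - (ζ : ℂ) ^ 2 = -γ by rw [hγ]; push_cast; ring]
    field_simp
  refine ⟨hγ0, ?_, resonantF_zero ζ⟩
  rw [hresidue]
  exact tendsto_sub_mul_resonantF hζ0
end
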